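/- arXiv:2305.01739 — 2 statements merged into one kernel-verified Lean document; each statement's English description precedes it below -/
import Mathlib

section
/- Let Θ(x) = (θ ⊙ x) a^μ x^{L(μ)} and Φ(x) = (φ ⊙ x) a^ν x^{L(ν)} be vector fields on Fⁿ, where θ, φ ∈ Fⁿ are constant vectors, ⊙ is the Hadamard (componentwise) product, x^m = x₁^{m₁}⋯xₙ^{mₙ}, and a^μ, a^ν are scalar parameters. Then the Lie bracket [Θ, Φ] = (DΦ)Θ − (DΘ)Φ equals (α ⊙ x) a^{μ+ν} x^{L(μ+ν)} where α = ⟨L(ν), θ⟩ φ − ⟨L(μ), φ⟩ θ and ⟨·,·⟩ is the standard inner product. -/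
/-!
The Laurent monomial `x ^ k` has logarithmic derivative `∑ⱼ kⱼ dxⱼ / xⱼ`, so its derivative along
a diagonal field `(c ⊙ x) C x ^ k'` is `⟨k, c⟩ C x ^ (k + k')`. By the Leibniz rule, each component
of `(DΦ) Θ` is the term from differentiating the factor `xᵢ`, which is symmetric in `Θ` and `Φ`
and cancels in the bracket, plus the term from differentiating the monomial, which gives the
inner products in `α`.
-/

open Finset

section MonomialVectorField

variable {F : Type*} [RCLike F] {n : ℕ}

def laurentMonomial (k : Fin n → ℤ) (x : Fin n → F) : F := ∏ j, x j ^ k j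

def monomialVectorField (c : Fin n → F) (k : Fin n → ℤ) (C : F) (x : Fin n → F) : Fin n → F :=
  fun i => c i * x i * C * laurentMonomial k x

lemma laurentMonomial_add {k k' : Fin n → ℤ} {x : Fin n → F} (hx : ∀ i, x i ≠ 0) :
    laurentMonomial (k + k') x = laurentMonomial k x * laurentMonomial k' x := by
  simp only [laurentMonomial, Pi.add_apply, ← prod_mul_distrib, zpow_add₀ (hx _)]

lemma sum_div_mul_monomialVectorField {x : Fin n → F} (hx : ∀ i, x i ≠ 0) (k k' : Fin n → ℤ)
    (c : Fin n → F) (C : F) :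
    ∑ j, (k j : F) / x j * monomialVectorField c k' C x j
      = (∑ j, (k j : F) * c j) * C * laurentMonomial k' x := by
  simp only [monomialVectorField, sum_mul]
  exact sum_congr rfl fun j _ => by field_simp [hx j]

lemma hasFDerivAt_laurentMonomial (k : Fin n → ℤ) {x : Fin n → F} (hx : ∀ i, x i ≠ 0) :
    HasFDerivAt (laurentMonomial k)
      (laurentMonomial k x • ∑ j, ((k j : F) / x j) •
        (ContinuousLinearMap.proj j : (Fin n → F) →L[F] F)) x := by
  refine (HasFDerivAt.finsetProd (u := univ) fun j _ =>
    (hasDerivAt_zpow (k j) (x j) (Or.inl (hx j))).comp_hasFDerivAt x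
      (hasFDerivAt_apply j x)).congr_fderiv ?_
  rw [smul_sum]
  refine sum_congr rfl fun j _ => ?_
  rw [smul_smul, smul_smul]
  congr 1
  show (∏ l ∈ univ.erase j, x l ^ k l) * _ = _
  rw [laurentMonomial, ← mul_prod_erase _ _ (mem_univ j), zpow_sub_one₀ (hx j)]
  ring

lemma fderiv_monomialVectorField_apply (c : Fin n → F) (k : Fin n → ℤ) (C : F)
    {x : Fin n → F} (hx : ∀ i, x i ≠ 0) (v : Fin n → F) :
    fderiv F (monomialVectorField c k C) x v
      = fun i => c i * C * (v i + x i * ∑ j, (k j : F) / x j * v j) * laurentMonomial k x := by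
  have hasFDerivAt_component (i : Fin n) :
      HasFDerivAt (fun y => monomialVectorField c k C y i) _ x :=
    (((hasFDerivAt_apply (𝕜 := F) i x).const_mul (c i)).mul_const C).mul
      (hasFDerivAt_laurentMonomial k hx)
  rw [(hasFDerivAt_pi.2 hasFDerivAt_component).fderiv]
  ext i
  simp [div_eq_mul_inv]
  ring

end MonomialVectorField

/-- Lie bracket of two monomial vector fields `Θ(x) = (θ ⊙ x) a^μ x^{L(μ)}` and
`Φ(x) = (φ ⊙ x) a^ν x^{L(ν)}`: on the set where all `xᵢ ≠ 0`,
`[Θ,Φ] = (DΦ)Θ − (DΘ)Φ = (α ⊙ x) a^{μ+ν} x^{L(μ)+L(ν)}` with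
`α = ⟨L(ν),θ⟩ φ − ⟨L(μ),φ⟩ θ`. Here `A = a^μ`, `B = a^ν` are fixed scalars. -/
theorem stmt_4 {F : Type*} [RCLike F] {n : ℕ}
    (θ φ : Fin n → F) (Lμ Lν : Fin n → ℤ) (A B : F)
    (Θ Φ : (Fin n → F) → (Fin n → F))
    (hΘ : Θ = fun x i => θ i * x i * A * ∏ j, x j ^ Lμ j)
    (hΦ : Φ = fun x i => φ i * x i * B * ∏ j, x j ^ Lν j)
    (x : Fin n → F) (hx : ∀ i, x i ≠ 0) :
    fderiv F Φ x (Θ x) - fderiv F Θ x (Φ x)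
      = fun i => ((∑ j, (Lν j : F) * θ j) * φ i - (∑ j, (Lμ j : F) * φ j) * θ i)
          * x i * (A * B) * ∏ j, x j ^ (Lμ j + Lν j) := by
  have hΘ' : Θ = monomialVectorField θ Lμ A := hΘ
  have hΦ' : Φ = monomialVectorField φ Lν B := hΦ
  rw [hΘ', hΦ', fderiv_monomialVectorField_apply _ _ _ hx,
    fderiv_monomialVectorField_apply _ _ _ hx]
  ext i
  rw [Pi.sub_apply, sum_div_mul_monomialVectorField hx, sum_div_mul_monomialVectorField hx,
    ← laurentMonomial, ← Pi.add_def, laurentMonomial_add hx]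
  simp only [monomialVectorField]
  ring
end

section
/- Define on the set A of formal sums Σ_ν α_ν a^ν (with α_ν ∈ Fⁿ, ν ∈ ℕ₀^ℓ) the bracket of monomials [θ a^μ, φ a^ν] = (⟨L(ν), θ⟩ φ − ⟨L(μ), φ⟩ θ) a^{μ+ν}, extended bilinearly, where L : ℕ₀^ℓ → ℤ^n is additive. Then this bracket is antisymmetric and satisfies the Jacobi identity, making A a Lie algebra over F. -/
/-!
Both identities are bilinear (resp. trilinear) in the arguments, so it suffices to check them on
monomials, where they become identities between coefficient vectors. Only two properties of the
pairing `⟨L(μ), θ⟩` enter: it is additive in `μ` and linear in `θ`. Antisymmetry is then visible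
from the formula. For the Jacobi identity one checks on monomials the Leibniz form
`[[x, y], z] + [y, [x, z]] = [x, [y, z]]`, where it is a polynomial identity in the pairings,
and combines it with antisymmetry.
-/

namespace MonomialBracket

open Finsupp

variable {R M V : Type*} [CommRing R] [AddCommMonoid M] [AddCommGroup V] [Module R V]

def coeff (S : M →+ Module.Dual R V) (μ ν : M) (θ φ : V) : V :=
  S ν θ • φ - S μ φ • θ

variable (S : M →+ Module.Dual R V)

theorem coeff_swap (μ ν : M) (θ φ : V) : coeff S ν μ φ θ = -coeff S μ ν θ φ := by
  simp only [coeff, neg_sub]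

theorem coeff_leibniz (μ ν κ : M) (θ φ ψ : V) :
    coeff S (μ + ν) κ (coeff S μ ν θ φ) ψ =
      coeff S μ (ν + κ) θ (coeff S ν κ φ ψ) - coeff S ν (μ + κ) φ (coeff S μ κ θ ψ) := by
  simp only [coeff, map_add, map_sub, map_smul, LinearMap.add_apply, smul_eq_mul]
  module

variable {B : (M →₀ V) →ₗ[R] (M →₀ V) →ₗ[R] (M →₀ V)}
  (hB : ∀ μ ν θ φ, B (single μ θ) (single ν φ) = single (μ + ν) (coeff S μ ν θ φ))
include hB

theorem antisymm (x y : M →₀ V) : B x y = -B y x := by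
  suffices B = -B.flip from congr($this x y)
  refine lhom_ext fun μ θ => lhom_ext fun ν φ => ?_
  simp [hB, add_comm ν μ, coeff_swap S μ ν]

theorem leibniz (x y z : M →₀ V) : B (B x y) z + B y (B x z) = B x (B y z) := by
  let comp : (M →₀ V) →ₗ[R] (M →₀ V) →ₗ[R] (M →₀ V) →ₗ[R] (M →₀ V) :=
    (LinearMap.llcomp R (M →₀ V) (M →₀ V) (M →₀ V)).compl₁₂ B B
  -- stated with `+`: instance search finds no `Sub` on this triple space of linear maps
  suffices B.compr₂ B + comp.flip = comp from congr($this x y z)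
  refine lhom_ext fun μ θ => lhom_ext fun ν φ => lhom_ext fun κ ψ => ?_
  simp [comp, hB, coeff_leibniz, add_assoc, add_left_comm ν μ]

theorem jacobi (x y z : M →₀ V) : B x (B y z) + B y (B z x) + B z (B x y) = 0 := by
  rw [antisymm S hB z (B x y), antisymm S hB z x, map_neg, ← leibniz S hB x y z]
  abel

end MonomialBracket

theorem map_add_of_eq_sum_mul {ι κ : Type*} [Fintype ι] {L : (ι →₀ ℕ) → κ → ℤ}
    (Lt : ι → κ → ℤ) (hL : ∀ μ j, L μ j = ∑ i, (μ i : ℤ) * Lt i j) (μ ν : ι →₀ ℕ) :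
    L (μ + ν) = L μ + L ν := by
  ext j
  simp [hL, add_mul, Finset.sum_add_distrib]

/-- The bracket on the space `A` of formal sums `Σ_ν α_ν a^ν` (modeled as finitely
supported families of coefficient vectors), defined on monomials by
`[θ a^μ, φ a^ν] = (⟨L(ν),θ⟩ φ − ⟨L(μ),φ⟩ θ) a^{μ+ν}` and extended bilinearly,
is antisymmetric and satisfies the Jacobi identity. -/
theorem stmt_8 {F : Type*} [RCLike F] {ℓ n : ℕ} (Lt : Fin ℓ → Fin n → ℤ)
    (L : (Fin ℓ →₀ ℕ) → (Fin n → ℤ))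
    (hL : ∀ μ j, L μ j = ∑ i, (μ i : ℤ) * Lt i j)
    (B : ((Fin ℓ →₀ ℕ) →₀ (Fin n → F)) →ₗ[F]
          ((Fin ℓ →₀ ℕ) →₀ (Fin n → F)) →ₗ[F] ((Fin ℓ →₀ ℕ) →₀ (Fin n → F)))
    (hB : ∀ (μ ν : Fin ℓ →₀ ℕ) (θ φ : Fin n → F),
      B (Finsupp.single μ θ) (Finsupp.single ν φ)
        = Finsupp.single (μ + ν)
            ((∑ j, (L ν j : F) * θ j) • φ - (∑ j, (L μ j : F) * φ j) • θ)) :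
    (∀ x y, B x y = - B y x) ∧
      (∀ x y z, B x (B y z) + B y (B z x) + B z (B x y) = 0) := by
  let S : (Fin ℓ →₀ ℕ) →+ Module.Dual F (Fin n → F) :=
    (dotProductBilin F F).toAddMonoidHom.comp <|
      ((Int.castAddHom F).compLeft (Fin n)).comp
        (AddMonoidHom.mk' L (map_add_of_eq_sum_mul Lt hL))
  have hB' : ∀ μ ν θ φ, B (Finsupp.single μ θ) (Finsupp.single ν φ) =
      Finsupp.single (μ + ν) (MonomialBracket.coeff S μ ν θ φ) := hB
  exact ⟨MonomialBracket.antisymm S hB', MonomialBracket.jacobi S hB'⟩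
end
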